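/- Let X be a Hermitian d×d complex matrix and let μ > 0. Then Tr[h_μ(X)] ≤ ‖X‖₁ ≤ Tr[h_μ(X)] + μ·d/2. -/

import Mathlib

open Matrix BigOperators
open scoped ComplexOrder Classical

/-- Junk-valued positive semidefinite square root: for a positive semidefinite matrix it is
the PSD square root, otherwise it is `0`. -/
noncomputable def msqrt {n : Type*} [Fintype n] [DecidableEq n]
    (M : Matrix n n ℂ) : Matrix n n ℂ :=
  if h : M.PosSemidef then
    (h.1.eigenvectorUnitary : Matrix n n ℂ) *
      Matrix.diagonal ((↑) ∘ (Real.sqrt ·) ∘ h.1.eigenvalues) *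
      (star h.1.eigenvectorUnitary : Matrix n n ℂ)
  else 0

/-- The trace norm `‖M‖₁ = Tr √(Mᴴ M)` of a square complex matrix. -/
noncomputable def traceNorm {n : Type*} [Fintype n] [DecidableEq n]
    (M : Matrix n n ℂ) : ℝ :=
  (msqrt (Mᴴ * M)).trace.re

/-- The Huber penalty function `h_μ`. -/
noncomputable def huber (μ x : ℝ) : ℝ :=
  if |x| < μ then x ^ 2 / (2 * μ) else |x| - μ / 2

/-- Junk-valued matrix Huber function: for a Hermitian matrix it applies `h_μ` to the
eigenvalues through the spectral decomposition, otherwise it is `0`. -/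
noncomputable def mhuber {n : Type*} [Fintype n] [DecidableEq n]
    (μ : ℝ) (M : Matrix n n ℂ) : Matrix n n ℂ :=
  if h : M.IsHermitian then
    (h.eigenvectorUnitary : Matrix n n ℂ) *
      Matrix.diagonal (fun i => (huber μ (h.eigenvalues i) : ℂ)) *
      (h.eigenvectorUnitary : Matrix n n ℂ)ᴴ
  else 0

/-!
Both matrices `|X|` and `h_μ(X)` are functions of `X` in the continuous functional calculus,
so their traces are `∑ |λᵢ|` and `∑ h_μ(λᵢ)` over the eigenvalues `λᵢ` of `X`. The theorem
then follows by summing the scalar bounds `h_μ(x) ≤ |x| ≤ h_μ(x) + μ/2` over the `d`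
eigenvalues.
-/

lemma huber_le_abs {μ : ℝ} (hμ : 0 ≤ μ) (x : ℝ) : huber μ x ≤ |x| := by
  unfold huber
  split_ifs with h
  · rw [div_le_iff₀ (by linarith [abs_nonneg x]), ← sq_abs]
    nlinarith [abs_nonneg x]
  · linarith

lemma abs_le_huber_add_half (μ x : ℝ) : |x| ≤ huber μ x + μ / 2 := by
  unfold huber
  split_ifs with h
  · have hμ : 0 < μ := (abs_nonneg x).trans_lt h
    -- AM-GM: `|x| ≤ x² / (2μ) + μ / 2`
    rw [div_add' _ _ _ (by positivity), le_div_iff₀ (by positivity), ← sq_abs]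
    nlinarith [sq_nonneg (|x| - μ)]
  · linarith

namespace Matrix

variable {n 𝕜 : Type*} [Fintype n] [DecidableEq n] [RCLike 𝕜]

open scoped MatrixOrder

lemma IsHermitian.trace_cfc {A : Matrix n n 𝕜} (hA : A.IsHermitian) (f : ℝ → ℝ) :
    (cfc f A).trace = ∑ i, (f (hA.eigenvalues i) : 𝕜) := by
  rw [hA.cfc_eq, IsHermitian.cfc, Unitary.conjStarAlgAut_apply, trace_mul_cycle,
    Unitary.coe_star_mul_self, one_mul, trace_diagonal]
  rfl

lemma PosSemidef.msqrt_eq_sqrt {A : Matrix n n ℂ} (hA : A.PosSemidef) :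
    msqrt A = CFC.sqrt A := by
  rw [CFC.sqrt_eq_real_sqrt A hA.nonneg, cfcₙ_eq_cfc, hA.1.cfc_eq, msqrt, dif_pos hA]
  rfl

lemma traceNorm_eq_re_trace_abs (A : Matrix n n ℂ) : traceNorm A = (CFC.abs A).trace.re := by
  rw [traceNorm, (posSemidef_conjTranspose_mul_self A).msqrt_eq_sqrt]
  rfl

lemma IsHermitian.traceNorm_eq_sum_abs_eigenvalues {A : Matrix n n ℂ} (hA : A.IsHermitian) :
    traceNorm A = ∑ i, |hA.eigenvalues i| := by
  rw [traceNorm_eq_re_trace_abs, CFC.abs_eq_cfc_norm A hA.isSelfAdjoint, hA.trace_cfc]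
  rw [← RCLike.ofReal_sum]
  exact RCLike.ofReal_re (K := ℂ) _

lemma IsHermitian.mhuber_eq_cfc {A : Matrix n n ℂ} (hA : A.IsHermitian) (μ : ℝ) :
    mhuber μ A = cfc (huber μ) A := by
  rw [hA.cfc_eq, mhuber, dif_pos hA]
  rfl

lemma IsHermitian.re_trace_mhuber {A : Matrix n n ℂ} (hA : A.IsHermitian) (μ : ℝ) :
    (mhuber μ A).trace.re = ∑ i, huber μ (hA.eigenvalues i) := by
  rw [hA.mhuber_eq_cfc, hA.trace_cfc, ← RCLike.ofReal_sum]
  exact RCLike.ofReal_re (K := ℂ) _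

end Matrix

/-- For a Hermitian `d × d` matrix `X` and `μ > 0`:
`Tr[h_μ(X)] ≤ ‖X‖₁ ≤ Tr[h_μ(X)] + μ·d/2`. -/
theorem smoothTraceNorm_le_traceNorm_le {d : ℕ}
    (X : Matrix (Fin d) (Fin d) ℂ) (hX : X.IsHermitian)
    (μ : ℝ) (hμ : 0 < μ) :
    (mhuber μ X).trace.re ≤ traceNorm X ∧
      traceNorm X ≤ (mhuber μ X).trace.re + μ * d / 2 := by
  rw [hX.traceNorm_eq_sum_abs_eigenvalues, hX.re_trace_mhuber]
  refine ⟨Finset.sum_le_sum fun i _ => huber_le_abs hμ.le _, ?_⟩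
  calc ∑ i, |hX.eigenvalues i| ≤ ∑ i, (huber μ (hX.eigenvalues i) + μ / 2) :=
        Finset.sum_le_sum fun i _ => abs_le_huber_add_half μ _
    _ = ∑ i, huber μ (hX.eigenvalues i) + μ * d / 2 := by
        rw [Finset.sum_add_distrib, Finset.sum_const, Finset.card_univ, Fintype.card_fin,
          nsmul_eq_mul]
        ring
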